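/- For every α ∈ [0, 1/2), the distribution P2 satisfies d_KL(P2 ‖ (P2)_{G2}) = 0, where (P2)_{G2} is the projection of P2 onto the v-structure X→Z←Y. Moreover, there exist constants c > 0 and α₀ ∈ (0, 1/2) such that for every α ∈ (0, α₀], d_KL(P2 ‖ (P2)_{G1}) ≥ c·α², where (P2)_{G1} is the projection of P2 onto the chain X→Z→Y. -/

import Mathlib

/-!
Under `P2 a` the pair `(X, Y)` is uniform, so `P(x, y) = P(x) P(y)` and `P2 a` is its own
v-structure projection. Its chain projection differs from it by exactly `±a/16` at each of the
eight points. As all probabilities involved are at most `1/4`, `√p + √q ≤ 1`, and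
`p log (p/q) ≥ p - q + (√p - √q)² ≥ p - q + (p - q)²`; summing, the linear terms cancel and
`d_KL ≥ 8 (a/16)² = a²/32`.
-/

open scoped BigOperators

noncomputable section

/-- The distribution `P1` on `{0,1}³` (coordinates `(x,y,z)`):
`P1(x,y,z) = (1/2)·(1/4 + (1/2)·1[x=z])·((1−α)/2 + α·1[y=z])`. -/
noncomputable def P1 (a : ℝ) : Bool × Bool × Bool → ℝ := fun w =>
  (1 / 2) * (1 / 4 + (1 / 2) * (if w.1 = w.2.2 then (1 : ℝ) else 0)) *
    ((1 - a) / 2 + a * (if w.2.1 = w.2.2 then (1 : ℝ) else 0))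

/-- The distribution `P2` on `{0,1}³` (coordinates `(x,y,z)`):
`P2(x,y,z) = (1/4)·((1/2)·1[x=z] + α·1[y=z] + (1/4 − α/2))`. -/
noncomputable def P2 (a : ℝ) : Bool × Bool × Bool → ℝ := fun w =>
  (1 / 4) * ((1 / 2) * (if w.1 = w.2.2 then (1 : ℝ) else 0) +
    a * (if w.2.1 = w.2.2 then (1 : ℝ) else 0) + (1 / 4 - a / 2))

/-- KL divergence between pmfs on a finite set (natural logarithm). -/
noncomputable def klDiv {α : Type*} [Fintype α] (P Q : α → ℝ) : ℝ :=
  ∑ w, P w * Real.log (P w / Q w)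

/-- Projection of a joint pmf of `(X,Y,Z)` onto the chain `X → Z → Y`:
`P_{G1}(x,y,z) = P(x)·P(z∣x)·P(y∣z)`. -/
noncomputable def projChain {A B C : Type*} [Fintype A] [Fintype B] [Fintype C]
    (p : A × B × C → ℝ) : A × B × C → ℝ := fun w =>
  (∑ y, ∑ z, p (w.1, y, z)) *
    ((∑ y, p (w.1, y, w.2.2)) / (∑ y, ∑ z, p (w.1, y, z))) *
    ((∑ x, p (x, w.2.1, w.2.2)) / (∑ x, ∑ y, p (x, y, w.2.2)))

/-- Projection of a joint pmf of `(X,Y,Z)` onto the v-structure `X → Z ← Y`: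
`P_{G2}(x,y,z) = P(x)·P(y)·P(z∣x,y)`. -/
noncomputable def projV {A B C : Type*} [Fintype A] [Fintype B] [Fintype C]
    (p : A × B × C → ℝ) : A × B × C → ℝ := fun w =>
  (∑ y, ∑ z, p (w.1, y, z)) * (∑ x, ∑ z, p (x, w.2.1, z)) *
    (p w / (∑ z, p (w.1, w.2.1, z)))

theorem klDiv_self {ι : Type*} [Fintype ι] (P : ι → ℝ) : klDiv P P = 0 := by
  simp [klDiv]

theorem projV_eq_self_of_indep {A B C : Type*} [Fintype A] [Fintype B] [Fintype C]
    (p : A × B × C → ℝ)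
    (hindep : ∀ x y, ∑ z, p (x, y, z) = (∑ y, ∑ z, p (x, y, z)) * (∑ x, ∑ z, p (x, y, z)))
    (hpos : ∀ x y, ∑ z, p (x, y, z) ≠ 0) :
    projV p = p := by
  funext ⟨x, y, z⟩
  simp only [projV]
  rw [← hindep x y]
  field_simp [hpos x y]

theorem sub_add_sq_sqrt_sub_le_mul_log_div {p q : ℝ} (hp : 0 < p) (hq : 0 < q) :
    p - q + (√p - √q) ^ 2 ≤ p * Real.log (p / q) := by
  set s := √p
  set t := √q
  have hs : 0 < s := Real.sqrt_pos.mpr hp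
  have ht : 0 < t := Real.sqrt_pos.mpr hq
  have hps : p = s ^ 2 := (Real.sq_sqrt hp.le).symm
  have hqt : q = t ^ 2 := (Real.sq_sqrt hq.le).symm
  have hlog : Real.log (p / q) = -2 * Real.log (t / s) := by
    rw [hps, hqt, ← div_pow, Real.log_pow, ← inv_div t s, Real.log_inv]
    push_cast; ring
  have hle : s * Real.log (t / s) ≤ t - s := by
    have := mul_le_mul_of_nonneg_left (Real.log_le_sub_one_of_pos (div_pos ht hs)) hs.le
    rwa [mul_sub, mul_div_cancel₀ t hs.ne', mul_one] at this
  rw [hlog, hps, hqt]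
  nlinarith

theorem sq_sub_le_sq_sqrt_sub {p q : ℝ} (hp : 0 ≤ p) (hq : 0 ≤ q) (h : √p + √q ≤ 1) :
    (p - q) ^ 2 ≤ (√p - √q) ^ 2 := by
  have hsum : (√p + √q) ^ 2 ≤ 1 := pow_le_one₀ (by positivity) h
  calc (p - q) ^ 2 = (√p ^ 2 - √q ^ 2) ^ 2 := by rw [Real.sq_sqrt hp, Real.sq_sqrt hq]
    _ = (√p - √q) ^ 2 * (√p + √q) ^ 2 := by ring
    _ ≤ (√p - √q) ^ 2 := mul_le_of_le_one_right (sq_nonneg _) hsum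

theorem sum_sq_sub_le_klDiv {ι : Type*} [Fintype ι] {P Q : ι → ℝ}
    (hP : ∀ i, P i ∈ Set.Ioc 0 (1 / 4)) (hQ : ∀ i, Q i ∈ Set.Ioc 0 (1 / 4))
    (hsum : ∑ i, P i = ∑ i, Q i) :
    ∑ i, (P i - Q i) ^ 2 ≤ klDiv P Q := by
  have hterm : ∀ i, P i - Q i + (P i - Q i) ^ 2 ≤ P i * Real.log (P i / Q i) := by
    intro i
    obtain ⟨hP0, hP1⟩ := hP i
    obtain ⟨hQ0, hQ1⟩ := hQ i
    have hsqrt : √(P i) + √(Q i) ≤ 1 := by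
      have h4 : √(1 / 4 : ℝ) = 1 / 2 := by
        rw [show (1 / 4 : ℝ) = (1 / 2) ^ 2 by norm_num, Real.sqrt_sq (by norm_num)]
      linarith [Real.sqrt_le_sqrt hP1, Real.sqrt_le_sqrt hQ1]
    linarith [sub_add_sq_sqrt_sub_le_mul_log_div hP0 hQ0,
      sq_sub_le_sq_sqrt_sub hP0.le hQ0.le hsqrt]
  have hzero : ∑ i, (P i - Q i) = 0 := by rw [Finset.sum_sub_distrib, hsum, sub_self]
  calc ∑ i, (P i - Q i) ^ 2 = ∑ i, (P i - Q i + (P i - Q i) ^ 2) := by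
        rw [Finset.sum_add_distrib, hzero, zero_add]
    _ ≤ klDiv P Q := Finset.sum_le_sum fun i _ => hterm i

theorem sum_P2_z (a : ℝ) (x y : Bool) : ∑ z, P2 a (x, y, z) = 1 / 4 := by
  cases x <;> cases y <;> simp [P2] <;> ring

theorem projV_P2 (a : ℝ) : projV (P2 a) = P2 a := by
  refine projV_eq_self_of_indep _ (fun x y => ?_) (fun x y => by rw [sum_P2_z]; norm_num)
  simp only [sum_P2_z, Finset.sum_const, Finset.card_univ, Fintype.card_bool, nsmul_eq_mul]
  norm_num

theorem P2_mem_Ioc {a : ℝ} (ha : 0 ≤ a) (ha' : a < 1 / 2) (w : Bool × Bool × Bool) :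
    P2 a w ∈ Set.Ioc 0 (1 / 4) := by
  obtain ⟨x, y, z⟩ := w
  cases x <;> cases y <;> cases z <;> simp [P2] <;> constructor <;> linarith

/-- `P(x)·P(z∣x)·P(y∣z)` for `P = P2 a`, where `X`, `Z` are uniform, `P(x = z) = 3/4` and
`P(y = z) = (1 + a)/2`. -/
def Q2 (a : ℝ) : Bool × Bool × Bool → ℝ := fun w =>
  (1 / 8) * ((if w.1 = w.2.2 then (1 : ℝ) else 0) + 1 / 2) *
    (1 - a + 2 * a * (if w.2.1 = w.2.2 then (1 : ℝ) else 0))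

theorem projChain_P2 (a : ℝ) : projChain (P2 a) = Q2 a := by
  funext ⟨x, y, z⟩
  cases x <;> cases y <;> cases z <;> simp [projChain, P2, Q2] <;> ring

theorem Q2_mem_Ioc {a : ℝ} (ha : 0 ≤ a) (ha' : a ≤ 1 / 3) (w : Bool × Bool × Bool) :
    Q2 a w ∈ Set.Ioc 0 (1 / 4) := by
  obtain ⟨x, y, z⟩ := w
  cases x <;> cases y <;> cases z <;> simp [Q2] <;> constructor <;> linarith

theorem sum_P2_eq_sum_Q2 (a : ℝ) : ∑ w, P2 a w = ∑ w, Q2 a w := by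
  simp [Fintype.sum_prod_type, P2, Q2]; ring

theorem sq_P2_sub_Q2 (a : ℝ) (w : Bool × Bool × Bool) :
    (P2 a w - Q2 a w) ^ 2 = (a / 16) ^ 2 := by
  obtain ⟨x, y, z⟩ := w
  cases x <;> cases y <;> cases z <;> simp [P2, Q2] <;> ring

/-- `d_KL(P2 ‖ (P2)_{G2}) = 0` for the v-structure `X → Z ← Y`, and for all small enough
`α > 0`, `d_KL(P2 ‖ (P2)_{G1}) = Ω(α²)` for the chain `X → Z → Y`. -/
theorem kl_P2_projections :
    (∀ a : ℝ, 0 ≤ a → a < 1 / 2 → klDiv (P2 a) (projV (P2 a)) = 0) ∧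
      ∃ c : ℝ, 0 < c ∧ ∃ a₀ : ℝ, 0 < a₀ ∧ a₀ < 1 / 2 ∧
        ∀ a : ℝ, 0 < a → a ≤ a₀ → c * a ^ 2 ≤ klDiv (P2 a) (projChain (P2 a)) := by
  refine ⟨fun a _ _ => by rw [projV_P2, klDiv_self], 1 / 32, by norm_num, 1 / 3, by norm_num,
    by norm_num, fun a ha ha' => ?_⟩
  calc 1 / 32 * a ^ 2 = ∑ w, (P2 a w - Q2 a w) ^ 2 := by
        simp [sq_P2_sub_Q2]; ring
    _ ≤ klDiv (P2 a) (projChain (P2 a)) := by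
        rw [projChain_P2]
        exact sum_sq_sub_le_klDiv (P2_mem_Ioc ha.le (by linarith)) (Q2_mem_Ioc ha.le ha')
          (sum_P2_eq_sum_Q2 a)
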